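/- For the tensor algebra T(W) over a finite-dimensional K-vector space W, with the canonical flat connection ∇_W on Ω¹T(W) (determined by ∇_W(dw) = 0 for w ∈ W) and a skew-symmetric pairing on W, the 1-divergence applied to Hamiltonian derivations is given explicitly by: for cyclic words w = w_1⋯w_r (w_i ∈ W), −δ_1(w) = Σ_{s ≠ t} ⟨w_s, w_t⟩ |w_{s+1}⋯w_{t−1}| ⊗ |w_{t+1}⋯w_{s−1}| (indices cyclic), which is the ribbon-graph (tadpole) cobracket on |T(W)|. -/

import Mathlib

open scoped TensorProduct

/-!
STATEMENT 12: For the tensor algebra `T(W)` over a finite-dimensional vector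
space `W`, with the canonical flat connection `∇_W` on `Ω¹T(W)` (determined by
`∇_W(dw) = 0`) and a skew-symmetric pairing `⟨·,·⟩` on `W`, the 1-divergence
applied to the Hamiltonian derivation of a cyclic word `w = w_1⋯w_r` is
`−δ_1(w) = Σ_{s ≠ t} ⟨w_s, w_t⟩ |w_{s+1}⋯w_{t−1}| ⊗ |w_{t+1}⋯w_{s−1}|`
(indices cyclic), the tadpole ribbon-graph cobracket on `|T(W)|`.

`Ω¹T(W)` is the free `T(W)`-bimodule on `W`, concretely
`Ω1 = T ⊗ W ⊗ T` with `a (dv) b = a ⊗ v ⊗ b`; `d : T → Ω1` is the universal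
derivation (`d(ι v) = 1 ⊗ v ⊗ 1` plus the Leibniz rule);
`H = Ham(|u|)` is the Hamiltonian derivation of the word `u` (pinned by the
extended-pairing formula `hamApply` on words); and
`c_{∇_W}(H) = (i_{φ(H)} ⊗ id)∘∇_W − L_H` is the `T(W)`-bimodule endomorphism
of `Ω¹T(W)` determined by `c(a (dv) b) = −a·d(H(ι v))·b`.  Its trace `δ_1(u)`
is computed, via the basis `{d(b_i)}` of the free bimodule `Ω¹T(W)`, as
`Σ_i |x_i| ⊗ |y_i|` where `c(d b_i) = Σ x_i (d b_i) y_i`-coefficient extraction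
is given by `coordMap`, landing in `|T(W)| ⊗ |T(W)| ≅ |T(W)^e|`.
-/

def commutatorSubmodule (K B : Type*) [Field K] [Ring B] [Algebra K B] : Submodule K B :=
  Submodule.span K {x : B | ∃ a b : B, x = a * b - b * a}

noncomputable def wordProd {K W : Type*} [Field K] [AddCommGroup W] [Module K W]
    (l : List W) : TensorAlgebra K W :=
  (l.map (TensorAlgebra.ι K)).prod

noncomputable def hamApply {K W : Type*} [Field K] [AddCommGroup W] [Module K W]
    (p : W →ₗ[K] W →ₗ[K] K) (u w : List W) : TensorAlgebra K W :=
  ∑ i ∈ Finset.range u.length, ∑ j ∈ Finset.range w.length,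
    p (u.getD i 0) (w.getD j 0) •
      wordProd (w.take j ++ u.drop (i + 1) ++ u.take i ++ w.drop (j + 1))

/-- Left multiplication by `a ∈ T(W)` on `Ω¹T(W) = T ⊗ W ⊗ T`. -/
noncomputable def lmulOm (K W : Type*) [Field K] [AddCommGroup W] [Module K W]
    (a : TensorAlgebra K W) :
    TensorAlgebra K W ⊗[K] (W ⊗[K] TensorAlgebra K W) →ₗ[K]
      TensorAlgebra K W ⊗[K] (W ⊗[K] TensorAlgebra K W) :=
  TensorProduct.map (LinearMap.mulLeft K a) LinearMap.id

/-- Right multiplication by `c ∈ T(W)` on `Ω¹T(W) = T ⊗ W ⊗ T`. -/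
noncomputable def rmulOm (K W : Type*) [Field K] [AddCommGroup W] [Module K W]
    (c : TensorAlgebra K W) :
    TensorAlgebra K W ⊗[K] (W ⊗[K] TensorAlgebra K W) →ₗ[K]
      TensorAlgebra K W ⊗[K] (W ⊗[K] TensorAlgebra K W) :=
  TensorProduct.map LinearMap.id (TensorProduct.map LinearMap.id (LinearMap.mulRight K c))

/-- Extraction of the coefficient bimodule `T ⊗ T` of the basis element `d(b_i)`
from `Ω¹T(W) = T ⊗ W ⊗ T`. -/
noncomputable def coordMap {K W : Type*} [Field K] [AddCommGroup W] [Module K W]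
    {ι : Type*} (bW : Module.Basis ι K W) (i : ι) :
    TensorAlgebra K W ⊗[K] (W ⊗[K] TensorAlgebra K W) →ₗ[K]
      TensorAlgebra K W ⊗[K] TensorAlgebra K W :=
  TensorProduct.map LinearMap.id
    ((TensorProduct.lid K (TensorAlgebra K W)).toLinearMap ∘ₗ
      TensorProduct.map (bW.coord i) LinearMap.id)

/-- Cyclic segment `w_{s+1} ⋯ w_{t−1}` of the word `u` (indices mod `u.length`). -/
def cseg {W : Type*} (u : List W) (s t : ℕ) : List W :=
  if s < t then (u.drop (s + 1)).take (t - s - 1)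
  else u.drop (s + 1) ++ u.take t


/-!
Evaluating `c_∇(Ham u)` on the generator `d b_i` gives `−d(Ham(u)(b_i))`, and
`Ham(u)(v) = Σ_s ⟨u_s, v⟩ u_{s+1}⋯u_{s−1}`, where `u_{s+1}⋯u_{s−1} = cseg u s s` is the cyclic
word with `u_s` deleted. The Leibniz rule expands `d(u_{s+1}⋯u_{s−1})` as a sum over the letters
`u_t`, `t ≠ s`, with coefficient `u_{s+1}⋯u_{t−1} ⊗ u_{t+1}⋯u_{s−1}` in front of `d u_t`.
Extracting the coefficient of `d b_i` and summing over the basis contracts `⟨u_s, b_i⟩ b_i^*(u_t)`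
to `⟨u_s, u_t⟩`, and the two minus signs cancel.
-/

open Finset

section Cyclic

variable {α : Type*}

theorem cseg_self_eq_append (u : List α) {s t : ℕ} (ht : t < u.length) (hst : s ≠ t) :
    cseg u s s = cseg u s t ++ u[t] :: cseg u t s := by
  rcases Nat.lt_or_gt_of_ne hst with h | h
  · have hsplit :
        u.drop (s + 1) = (u.drop (s + 1)).take (t - s - 1) ++ u[t] :: u.drop (t + 1) := by
      conv_lhs => rw [← List.take_append_drop (t - s - 1) (u.drop (s + 1)), List.drop_drop,
        show s + 1 + (t - s - 1) = t by omega, List.drop_eq_getElem_cons ht]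
    simp only [cseg, lt_irrefl, if_false, if_pos h, if_neg (Nat.lt_asymm h)]
    conv_lhs => rw [hsplit]
    rw [List.append_assoc, List.cons_append]
  · have hsplit : u.take s = u.take t ++ u[t] :: (u.drop (t + 1)).take (s - t - 1) := by
      conv_lhs => rw [show s = t + (s - t - 1 + 1) by omega, List.take_add,
        List.drop_eq_getElem_cons ht, List.take_succ_cons]
    simp only [cseg, lt_irrefl, if_false, if_pos h, if_neg (Nat.lt_asymm h)]
    rw [hsplit, List.append_assoc]

theorem length_cseg (u : List α) {s t : ℕ} (ht : t ≤ u.length) :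
    (cseg u s t).length = if s < t then t - s - 1 else u.length - s - 1 + t := by
  unfold cseg
  split_ifs <;> simp only [List.length_append, List.length_take, List.length_drop] <;> omega

theorem length_cseg_self (u : List α) {s : ℕ} (hs : s < u.length) :
    (cseg u s s).length = u.length - 1 := by
  simp only [cseg, lt_irrefl, if_false, List.length_append, List.length_take, List.length_drop]
  omega

theorem sum_range_length_cseg_self {M : Type*} [AddCommMonoid M] (u : List α) {s : ℕ}
    (hs : s < u.length) (d : α) (F : List α → α → List α → M) :
    ∑ i ∈ range (cseg u s s).length,
        F ((cseg u s s).take i) ((cseg u s s).getD i d) ((cseg u s s).drop (i + 1))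
      = ∑ t ∈ range u.length, if s ≠ t then F (cseg u s t) (u.getD t d) (cseg u t s) else 0 := by
  have hterm : ∀ t ∈ (range u.length).erase s,
      F (cseg u s t) (u.getD t d) (cseg u t s) =
        F ((cseg u s s).take (cseg u s t).length) ((cseg u s s).getD (cseg u s t).length d)
          ((cseg u s s).drop ((cseg u s t).length + 1)) := by
    intro t ht
    obtain ⟨hts, htr⟩ := mem_erase.mp ht
    have htr := mem_range.mp htr
    rw [cseg_self_eq_append u htr (Ne.symm hts)]
    simp [htr, List.drop_append, List.drop_eq_nil_of_le]
  rw [← sum_filter, filter_ne]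
  symm
  -- position `i` of `cseg u s s` carries the letter `u_{(s + 1 + i) mod |u|}`
  refine sum_nbij' (fun t => (cseg u s t).length)
    (fun i => if s + 1 + i < u.length then s + 1 + i else s + 1 + i - u.length) ?_ ?_ ?_ ?_ hterm
  · intro t ht
    simp only [mem_erase, mem_range] at ht ⊢
    rw [length_cseg u ht.2.le, length_cseg_self u hs]
    split_ifs <;> omega
  · intro i hi
    rw [mem_range, length_cseg_self u hs] at hi
    simp only [mem_erase, mem_range]
    split_ifs <;> omega
  · intro t ht
    simp only [mem_erase, mem_range] at ht
    rw [length_cseg u ht.2.le]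
    split_ifs <;> omega
  · intro i hi
    rw [mem_range, length_cseg_self u hs] at hi
    split_ifs <;> rw [length_cseg u (by omega)] <;> split_ifs <;> omega

end Cyclic

theorem Module.Basis.sum_apply_mul_coord {R M ι : Type*} [CommSemiring R] [AddCommMonoid M]
    [Module R M] [Fintype ι] (b : Module.Basis ι R M) (f : M →ₗ[R] R) (x : M) :
    ∑ i, f (b i) * b.coord i x = f x := by
  conv_rhs => rw [← b.sum_repr x, map_sum]
  simp only [map_smul, smul_eq_mul, Module.Basis.coord_apply, mul_comm]

section TensorAlgebra

variable {K W : Type*} [Field K] [AddCommGroup W] [Module K W]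

theorem wordProd_nil : wordProd ([] : List W) = (1 : TensorAlgebra K W) := rfl

theorem wordProd_cons (v : W) (l : List W) :
    wordProd (K := K) (v :: l) = TensorAlgebra.ι K v * wordProd l := by
  simp [wordProd]

theorem wordProd_singleton (v : W) : wordProd (K := K) [v] = TensorAlgebra.ι K v := by
  simp [wordProd]

theorem lmulOm_tmul (a x : TensorAlgebra K W) (v : W) (y : TensorAlgebra K W) :
    lmulOm K W a (x ⊗ₜ (v ⊗ₜ y)) = (a * x) ⊗ₜ (v ⊗ₜ y) := by
  simp [lmulOm]

theorem rmulOm_tmul (c x : TensorAlgebra K W) (v : W) (y : TensorAlgebra K W) :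
    rmulOm K W c (x ⊗ₜ (v ⊗ₜ y)) = x ⊗ₜ (v ⊗ₜ (y * c)) := by
  simp [rmulOm]

theorem lmulOm_one : lmulOm K W 1 = LinearMap.id := by
  simp [lmulOm, LinearMap.mulLeft_one, TensorProduct.map_id]

theorem rmulOm_one : rmulOm K W 1 = LinearMap.id := by
  simp [rmulOm, LinearMap.mulRight_one, TensorProduct.map_id]

theorem coordMap_tmul {ι : Type*} (bW : Module.Basis ι K W) (i : ι)
    (x : TensorAlgebra K W) (w : W) (y : TensorAlgebra K W) :
    coordMap bW i (x ⊗ₜ (w ⊗ₜ y)) = bW.coord i w • (x ⊗ₜ[K] y) := by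
  simp [coordMap, TensorProduct.tmul_smul]

section Leibniz

variable (d : TensorAlgebra K W →ₗ[K] TensorAlgebra K W ⊗[K] (W ⊗[K] TensorAlgebra K W))

theorem map_one_eq_zero_of_leibniz
    (hdLeib : ∀ a b : TensorAlgebra K W, d (a * b) = rmulOm K W b (d a) + lmulOm K W a (d b)) :
    d 1 = 0 := by
  simpa [lmulOm_one, rmulOm_one] using hdLeib 1 1

theorem d_wordProd (hd1 : ∀ v : W, d (TensorAlgebra.ι K v) = 1 ⊗ₜ (v ⊗ₜ 1))
    (hdLeib : ∀ a b : TensorAlgebra K W, d (a * b) = rmulOm K W b (d a) + lmulOm K W a (d b))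
    (l : List W) :
    d (wordProd l) = ∑ t ∈ range l.length,
      wordProd (l.take t) ⊗ₜ (l.getD t 0 ⊗ₜ wordProd (l.drop (t + 1))) := by
  induction l with
  | nil => simpa [wordProd_nil] using map_one_eq_zero_of_leibniz d hdLeib
  | cons v l ih =>
    rw [wordProd_cons, hdLeib, hd1, rmulOm_tmul, one_mul, ih, map_sum, List.length_cons,
      sum_range_succ', add_comm]
    simp only [List.take_succ_cons, List.getD_cons_succ, List.drop_succ_cons, List.take_zero,
      List.getD_cons_zero, List.drop_zero, wordProd_cons, wordProd_nil, lmulOm_tmul]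

theorem sum_coordMap_smul_d_wordProd {ι : Type*} [Fintype ι] (bW : Module.Basis ι K W)
    (hd1 : ∀ v : W, d (TensorAlgebra.ι K v) = 1 ⊗ₜ (v ⊗ₜ 1))
    (hdLeib : ∀ a b : TensorAlgebra K W, d (a * b) = rmulOm K W b (d a) + lmulOm K W a (d b))
    (f : W →ₗ[K] K) (l : List W) :
    ∑ i, coordMap bW i (f (bW i) • d (wordProd l)) = ∑ t ∈ range l.length,
      f (l.getD t 0) • (wordProd (l.take t) ⊗ₜ[K] wordProd (l.drop (t + 1))) := by
  simp only [d_wordProd d hd1 hdLeib, map_smul, map_sum, coordMap_tmul, smul_sum, smul_smul]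
  rw [sum_comm]
  simp only [← sum_smul, bW.sum_apply_mul_coord]

end Leibniz

theorem hamApply_singleton (p : W →ₗ[K] W →ₗ[K] K) (u : List W) (v : W) :
    hamApply p u [v] = ∑ s ∈ range u.length, p (u.getD s 0) v • wordProd (cseg u s s) := by
  simp [hamApply, cseg]

end TensorAlgebra

theorem one_divergence_is_tadpole_cobracket_general
    (K W : Type*) [Field K] [AddCommGroup W] [Module K W]
    {ι : Type*} [Fintype ι] (bW : Module.Basis ι K W)
    (p : W →ₗ[K] W →ₗ[K] K)
    (u : List W)
    -- `H = Ham(|u|)`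
    (H : TensorAlgebra K W →ₗ[K] TensorAlgebra K W)
    (hH : ∀ w : List W, H (wordProd w) = hamApply p u w)
    -- the universal derivation `d : T(W) → Ω¹T(W)`
    (d : TensorAlgebra K W →ₗ[K]
      TensorAlgebra K W ⊗[K] (W ⊗[K] TensorAlgebra K W))
    (hd1 : ∀ v : W, d (TensorAlgebra.ι K v) = 1 ⊗ₜ (v ⊗ₜ 1))
    (hdLeib : ∀ a b : TensorAlgebra K W,
      d (a * b) = rmulOm K W b (d a) + lmulOm K W a (d b))
    -- `c_{∇_W}(H)`, pinned on the bimodule generators by `c(a (dv) b) = −a·d(H v)·b`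
    (cH : TensorAlgebra K W ⊗[K] (W ⊗[K] TensorAlgebra K W) →ₗ[K]
      TensorAlgebra K W ⊗[K] (W ⊗[K] TensorAlgebra K W))
    (hcH : ∀ (a : TensorAlgebra K W) (v : W) (c : TensorAlgebra K W),
      cH (a ⊗ₜ (v ⊗ₜ c))
        = - lmulOm K W a (rmulOm K W c (d (H (TensorAlgebra.ι K v))))) :
    -- `−δ_1(|u|) = Σ_{s≠t} ⟨u_s,u_t⟩ |u_{s+1}⋯u_{t−1}| ⊗ |u_{t+1}⋯u_{s−1}|`
    - (∑ i : ι,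
        TensorProduct.map (commutatorSubmodule K (TensorAlgebra K W)).mkQ
            (commutatorSubmodule K (TensorAlgebra K W)).mkQ
          (coordMap bW i (cH (1 ⊗ₜ (bW i ⊗ₜ 1)))))
      = ∑ s ∈ Finset.range u.length, ∑ t ∈ Finset.range u.length,
          if s ≠ t then
            p (u.getD s 0) (u.getD t 0) •
              ((commutatorSubmodule K (TensorAlgebra K W)).mkQ (wordProd (cseg u s t)) ⊗ₜ
                (commutatorSubmodule K (TensorAlgebra K W)).mkQ (wordProd (cseg u t s)))
          else 0 := by
  set Q := (commutatorSubmodule K (TensorAlgebra K W)).mkQ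
  have hgen : ∀ v : W, cH (1 ⊗ₜ (v ⊗ₜ 1))
      = -∑ s ∈ range u.length, p (u.getD s 0) v • d (wordProd (cseg u s s)) := by
    intro v
    rw [hcH, rmulOm_one, lmulOm_one, ← wordProd_singleton, hH, hamApply_singleton]
    simp only [LinearMap.id_apply, map_sum, map_smul]
  have htrace : ∑ i, coordMap bW i (cH (1 ⊗ₜ (bW i ⊗ₜ 1))) = -∑ s ∈ range u.length,
      ∑ t ∈ range (cseg u s s).length, p (u.getD s 0) ((cseg u s s).getD t 0) •
        (wordProd ((cseg u s s).take t) ⊗ₜ[K] wordProd ((cseg u s s).drop (t + 1))) := by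
    simp only [hgen, map_neg, map_sum, sum_neg_distrib]
    rw [sum_comm]
    simp only [sum_coordMap_smul_d_wordProd d bW hd1 hdLeib]
  rw [← map_sum, htrace, map_neg, neg_neg, map_sum]
  refine sum_congr rfl fun s hs => ?_
  rw [← sum_range_length_cseg_self u (mem_range.mp hs) 0
    fun l w l' => p (u.getD s 0) w • (Q (wordProd l) ⊗ₜ[K] Q (wordProd l')), map_sum]
  simp only [map_smul, TensorProduct.map_tmul]

theorem one_divergence_is_tadpole_cobracket
    (K W : Type*) [Field K] [CharZero K] [AddCommGroup W] [Module K W]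
    [FiniteDimensional K W]
    {ι : Type*} [Fintype ι] (bW : Module.Basis ι K W)
    (p : W →ₗ[K] W →ₗ[K] K)
    (hskew : ∀ x y : W, p x y = - p y x)
    (u : List W)
    -- `H = Ham(|u|)`
    (H : TensorAlgebra K W →ₗ[K] TensorAlgebra K W)
    (hH : ∀ w : List W, H (wordProd w) = hamApply p u w)
    -- the universal derivation `d : T(W) → Ω¹T(W)`
    (d : TensorAlgebra K W →ₗ[K]
      TensorAlgebra K W ⊗[K] (W ⊗[K] TensorAlgebra K W))
    (hd1 : ∀ v : W, d (TensorAlgebra.ι K v) = 1 ⊗ₜ (v ⊗ₜ 1))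
    (hdLeib : ∀ a b : TensorAlgebra K W,
      d (a * b) = rmulOm K W b (d a) + lmulOm K W a (d b))
    -- `c_{∇_W}(H)`, pinned on the bimodule generators by `c(a (dv) b) = −a·d(H v)·b`
    (cH : TensorAlgebra K W ⊗[K] (W ⊗[K] TensorAlgebra K W) →ₗ[K]
      TensorAlgebra K W ⊗[K] (W ⊗[K] TensorAlgebra K W))
    (hcH : ∀ (a : TensorAlgebra K W) (v : W) (c : TensorAlgebra K W),
      cH (a ⊗ₜ (v ⊗ₜ c))
        = - lmulOm K W a (rmulOm K W c (d (H (TensorAlgebra.ι K v))))) :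
    -- `−δ_1(|u|) = Σ_{s≠t} ⟨u_s,u_t⟩ |u_{s+1}⋯u_{t−1}| ⊗ |u_{t+1}⋯u_{s−1}|`
    - (∑ i : ι,
        TensorProduct.map (commutatorSubmodule K (TensorAlgebra K W)).mkQ
            (commutatorSubmodule K (TensorAlgebra K W)).mkQ
          (coordMap bW i (cH (1 ⊗ₜ (bW i ⊗ₜ 1)))))
      = ∑ s ∈ Finset.range u.length, ∑ t ∈ Finset.range u.length,
          if s ≠ t then
            p (u.getD s 0) (u.getD t 0) •
              ((commutatorSubmodule K (TensorAlgebra K W)).mkQ (wordProd (cseg u s t)) ⊗ₜ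
                (commutatorSubmodule K (TensorAlgebra K W)).mkQ (wordProd (cseg u t s)))
          else 0 :=
  one_divergence_is_tadpole_cobracket_general K W bW p u H hH d hd1 hdLeib cH hcH
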